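/- arXiv:1909.04650 — 2 statements merged into one kernel-verified Lean document; each statement's English description precedes it below -/
import Mathlib

section
/- Let 0 ≤ l < n and z ∈ P_n with z_1 = ⋯ = z_{l+1}. Then I_{succ(z,l)} ⊆ I_z, and the annihilator of the S-module J_{z,l} = I_z / I_{succ(z,l)} equals I_{l+1} = I_{(1^{l+1})}, the ideal generated by all square-free monomials of degree l+1. -/
open MvPolynomial

/-- `PartitionOn n x` : `x` is a weakly decreasing sequence of naturals (0-based
indexing, so `x 0` is the first part `x_1`) vanishing from index `n` on; this
encodes a partition in `P_n ⊆ ℤ^n_{≥0}`. -/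
def PartitionOn (n : ℕ) (x : ℕ → ℕ) : Prop :=
  (∀ i j : ℕ, i ≤ j → x j ≤ x i) ∧ ∀ i : ℕ, n ≤ i → x i = 0

/-- A partition: a weakly decreasing, eventually zero sequence of naturals. -/
def IsPartitionF (x : ℕ → ℕ) : Prop :=
  (∀ i j : ℕ, i ≤ j → x j ≤ x i) ∧ ∃ n : ℕ, ∀ i : ℕ, n ≤ i → x i = 0

/-- The conjugate partition (1-based index): `conj x i = #{j : x_j ≥ i}`. -/
noncomputable def conj (x : ℕ → ℕ) (i : ℕ) : ℕ :=
  Set.ncard { j : ℕ | i ≤ x j }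

/-- The truncation `x(c)`, whose parts are `min (x i) c`. -/
def trunc (x : ℕ → ℕ) (c : ℕ) : ℕ → ℕ := fun i => min (x i) c

/-- The rectangular partition `(b^a)`: `a` parts equal to `b`. -/
def rect (a b : ℕ) : ℕ → ℕ := fun i => if i < a then b else 0

/-- The size `|x| = x_1 + ⋯ + x_n` of a partition supported in the first `n` indices. -/
def psize (n : ℕ) (x : ℕ → ℕ) : ℕ := ∑ i ∈ Finset.range n, x i

/-- The set `Z(X)` : pairs `(z, l)` with `z ∈ P_n`, `l ≥ 0` such that, writing `c = z_1`:
(1) there is `x ∈ X` with `x(c) ≤ z` and `x'_{c+1} ≤ l+1`, and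
(2) every `x ∈ X` with `x(c) ≤ z` and `x'_{c+1} ≤ l+1` has `x'_{c+1} = l+1`. -/
noncomputable def ZX (n : ℕ) (X : Set (ℕ → ℕ)) : Set ((ℕ → ℕ) × ℕ) :=
  { zl | PartitionOn n zl.1 ∧
    (∃ x ∈ X, trunc x (zl.1 0) ≤ zl.1 ∧ conj x (zl.1 0 + 1) ≤ zl.2 + 1) ∧
    ∀ x ∈ X, trunc x (zl.1 0) ≤ zl.1 → conj x (zl.1 0 + 1) ≤ zl.2 + 1 →
      conj x (zl.1 0 + 1) = zl.2 + 1 }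

/-- The monomial `e^u = e_1^{u_1} ⋯ e_n^{u_n}` in `S = k[e_1, …, e_n]`. -/
noncomputable def mon (k : Type*) [Field k] (n : ℕ) (u : ℕ → ℕ) : MvPolynomial (Fin n) k :=
  ∏ i : Fin n, (X i : MvPolynomial (Fin n) k) ^ u (i : ℕ)

/-- The ideal `I_x` generated by the `S_n`-orbit of the monomial `e^x`. -/
noncomputable def Ipart (k : Type*) [Field k] (n : ℕ) (x : ℕ → ℕ) :
    Ideal (MvPolynomial (Fin n) k) :=
  Ideal.span { f | ∃ σ : Equiv.Perm (Fin n),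
    f = ∏ i : Fin n, (X i : MvPolynomial (Fin n) k) ^ x ((σ i : Fin n) : ℕ) }

/-- The ideal `I_X = Σ_{x ∈ X} I_x`. -/
noncomputable def IXset (k : Type*) [Field k] (n : ℕ) (Xs : Set (ℕ → ℕ)) :
    Ideal (MvPolynomial (Fin n) k) :=
  ⨆ x ∈ Xs, Ipart k n x

/-- `succ(z,l) = {x ∈ P_n : x ≥ z and x_i > z_i for some i > l}` (1-based `i > l`
corresponds to 0-based index `≥ l`). -/
def succSet (n l : ℕ) (z : ℕ → ℕ) : Set (ℕ → ℕ) :=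
  { x | PartitionOn n x ∧ (∀ i, z i ≤ x i) ∧ ∃ i, l ≤ i ∧ z i < x i }

/-- `Y_{z,l} = {((z_1+1)^{l+1})} ∪ {((z_i+1)^i) : l+1 < i ≤ n, z_{i-1} > z_i}`
(here `i = m+2` in 1-based indexing). -/
def Yset (n : ℕ) (z : ℕ → ℕ) (l : ℕ) : Set (ℕ → ℕ) :=
  {rect (l+1) (z 0 + 1)} ∪
    { y | ∃ m : ℕ, l ≤ m ∧ m + 2 ≤ n ∧ z (m+1) < z m ∧ y = rect (m+2) (z (m+1) + 1) }

/-- `Y'_{z,l} = {((z_i+1)^i) : l+1 < i ≤ n, z_{i-1} > z_i}`. -/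
def Y'set (n : ℕ) (z : ℕ → ℕ) (l : ℕ) : Set (ℕ → ℕ) :=
  { y | ∃ m : ℕ, l ≤ m ∧ m + 2 ≤ n ∧ z (m+1) < z m ∧ y = rect (m+2) (z (m+1) + 1) }

/-- An ideal `I` is symmetric shifted if for every monomial `e^x ∈ I` with `x ∈ P_n`
and every `1 < k ≤ n` (0-based `0 < j < n`) with `x_1 > x_k`, one has `e^x · e_k/e_1 ∈ I`. -/
def SymShifted (k : Type*) [Field k] (n : ℕ) (I : Ideal (MvPolynomial (Fin n) k)) : Prop :=
  ∀ x : ℕ → ℕ, PartitionOn n x → mon k n x ∈ I →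
    ∀ j : ℕ, 0 < j → j < n → x j < x 0 →
      mon k n (fun i => if i = 0 then x 0 - 1 else if i = j then x j + 1 else x i) ∈ I

/-- The partitioning problem `BP(d, C; w)` is `r`-feasible: the multiset of `d` copies of
each of `w_1, …, w_n` (balls indexed by `Fin d × Fin n`, ball `(j,i)` of weight `w_i`)
can be distributed into bins `B_1, …, B_n` of exactly `d` balls each so that
`w(B_i) ≤ C_i` for all `i = r+1, …, n` (0-based bins `≥ r`). -/
def RFeasible (n d r : ℕ) (C w : ℕ → ℕ) : Prop :=
  ∃ A : Fin d × Fin n → Fin n,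
    (∀ b : Fin n, (Finset.univ.filter fun p => A p = b).card = d) ∧
    ∀ b : Fin n, r ≤ (b : ℕ) →
      (∑ p ∈ Finset.univ.filter (fun p => A p = b), w ((p.2 : Fin n) : ℕ)) ≤ C (b : ℕ)

/-- `X_w^d = {x ∈ P_n : x = σ_1(w) + ⋯ + σ_d(w) for some σ_1, …, σ_d ∈ S_n}`. -/
def XwPow (n d : ℕ) (w : ℕ → ℕ) : Set (ℕ → ℕ) :=
  { x | PartitionOn n x ∧ ∃ σ : Fin d → Equiv.Perm (Fin n),
      ∀ i : Fin n, x (i : ℕ) = ∑ j : Fin d, w ((σ j i : Fin n) : ℕ) }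

/-- `Y_n`: the elements of `Y` with at most `n` nonzero parts, regarded in `P_n`. -/
def restr (Y : Set (ℕ → ℕ)) (n : ℕ) : Set (ℕ → ℕ) :=
  { x ∈ Y | ∀ i, n ≤ i → x i = 0 }


/-!
The ideals involved are monomial ideals, so everything reduces to exponent vectors: a
polynomial lies in `I_X` iff each of its monomials is divisible by `e^{σ x}` for some `x ∈ X`
and `σ ∈ S_n`. Exponent vectors are compared through the counts `#{j | c < u j}`, which are
invariant under permutations and determine the decreasing rearrangement of `u`.

For `I_{(1^{l+1})} I_z ⊆ I_{succ(z,l)}`, sort the exponent `u` of `e^{σ(1^{l+1})} e^{τ z}`: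
the sorted vector lies entrywise between `z` and `z + 1` and has size `|z| + l + 1`, so it
exceeds `z` at some position `> l`. Conversely, a monomial `e^a ∉ I_{(1^{l+1})}` involves at
most `l` variables; placing them on the flat block `z_1 = ⋯ = z_{l+1}` gives a monomial
`e^a e^{τ z}` with fewer than `i` entries above `z_i` for each `i > l`, whereas every
`x ∈ succ(z,l)` has `i` such entries for some `i > l`; hence `e^a e^{τ z} ∉ I_{succ(z,l)}`.
-/

open Finset

section CountAbove

variable {n : ℕ}

/-- The part `λ'_{c+1}` of the conjugate of the partition `λ` obtained by sorting `u`. -/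
def countAbove (u : Fin n → ℕ) (c : ℕ) : ℕ := #{j | c < u j}

lemma countAbove_mono {u v : Fin n → ℕ} (h : u ≤ v) (c : ℕ) :
    countAbove u c ≤ countAbove v c :=
  card_le_card fun j hj => by
    simp only [mem_filter, mem_univ, true_and] at hj ⊢
    exact hj.trans_le (h j)

lemma countAbove_comp_perm (u : Fin n → ℕ) (σ : Equiv.Perm (Fin n)) (c : ℕ) :
    countAbove (u ∘ σ) c = countAbove u c :=
  card_equiv σ fun j => by simp

lemma lt_countAbove {u : Fin n → ℕ} (hu : Antitone u) {m : Fin n} {c : ℕ} (h : c < u m) :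
    (m : ℕ) < countAbove u c := by
  rw [Nat.lt_iff_add_one_le, ← Fin.card_Iic]
  exact card_le_card fun j hj => by
    simp only [mem_filter, mem_univ, true_and]
    exact h.trans_le (hu (mem_Iic.1 hj))

lemma countAbove_le {u : Fin n → ℕ} (hu : Antitone u) {m : Fin n} {c : ℕ} (h : u m ≤ c) :
    countAbove u c ≤ m := by
  rw [← Fin.card_Iio m]
  exact card_le_card fun j hj => by
    simp only [mem_filter, mem_univ, true_and] at hj
    by_contra hmj
    exact (hj.trans_le (hu (not_lt.1 (mt mem_Iio.2 hmj)))).not_ge h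

lemma le_of_countAbove_le {u v : Fin n → ℕ} (hu : Antitone u) (hv : Antitone v)
    (h : ∀ c, countAbove u c ≤ countAbove v c) : u ≤ v := fun m => by
  by_contra! hm
  exact (lt_countAbove hu hm).not_ge ((h _).trans (countAbove_le hv le_rfl))

lemma countAbove_add_le {b v : Fin n → ℕ} (hv : Antitone v) {t : ℕ} (hvt : ∀ j, v j ≤ t)
    (hbv : ∀ j, 0 < b j → v j = t) {i : Fin n} (hb : countAbove b 0 ≤ i) :
    countAbove (b + v) (v i) ≤ i := by
  rcases (hvt i).eq_or_lt with hi | hi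
  · refine le_trans (card_le_card fun j hj => ?_) hb
    simp only [mem_filter, mem_univ, true_and, Pi.add_apply] at hj ⊢
    have := hvt j
    omega
  · refine le_trans (card_le_card fun j hj => ?_) (countAbove_le hv le_rfl)
    simp only [mem_filter, mem_univ, true_and, Pi.add_apply] at hj ⊢
    rcases (b j).eq_zero_or_pos with h0 | h0
    · omega
    · rwa [hbv j h0]

lemma exists_lt_of_sum_lt {v w : Fin n → ℕ} {l : ℕ} (hwv : w ≤ v + 1)
    (hsum : ∑ i, v i + l < ∑ i, w i) : ∃ i : Fin n, l ≤ i ∧ v i < w i := by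
  by_contra! h
  have hle : ∀ i, w i ≤ v i + if (i : ℕ) < l then 1 else 0 := fun i => by
    split_ifs with hi
    · exact hwv i
    · simpa using h i (not_lt.1 hi)
  have := sum_le_sum fun i (_ : i ∈ univ) => hle i
  rw [sum_add_distrib, sum_boole, Fin.card_filter_val_lt, Nat.cast_id] at this
  omega

lemma exists_antitone_comp_perm (u : Fin n → ℕ) :
    ∃ π : Equiv.Perm (Fin n), Antitone (u ∘ π) :=
  ⟨Tuple.sort (OrderDual.toDual ∘ u), Tuple.monotone_sort (OrderDual.toDual ∘ u)⟩

end CountAbove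

lemma exists_perm_mapsTo {α : Type*} {s t : Finset α} (h : #s ≤ #t) :
    ∃ σ : Equiv.Perm α, ∀ i ∈ s, σ i ∈ t := by
  obtain ⟨t', ht', hcard⟩ := exists_subset_card_eq h
  obtain ⟨σ, hσ⟩ := Equiv.Perm.exists_map_finset_eq s t' hcard.symm
  exact ⟨σ, fun i hi => ht' (hσ ▸ mem_map_of_mem _ hi)⟩

section Partitions

variable {n l : ℕ} {z : ℕ → ℕ}

def zeroExtend (v : Fin n → ℕ) (i : ℕ) : ℕ := if h : i < n then v ⟨i, h⟩ else 0

@[simp]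
lemma zeroExtend_val (v : Fin n → ℕ) (i : Fin n) : zeroExtend v i = v i := dif_pos i.isLt

lemma partitionOn_zeroExtend {v : Fin n → ℕ} (hv : Antitone v) :
    PartitionOn n (zeroExtend v) := by
  refine ⟨fun i j hij => ?_, fun i hi => dif_neg hi.not_gt⟩
  by_cases hj : j < n
  · rw [zeroExtend, dif_pos hj, zeroExtend, dif_pos (hij.trans_lt hj)]
    exact hv hij
  · rw [zeroExtend, dif_neg hj]
    exact Nat.zero_le _

lemma PartitionOn.antitone (hz : PartitionOn n z) : Antitone fun i : Fin n => z i :=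
  fun _ _ h => hz.1 _ _ h

lemma rect_le (a b i : ℕ) : rect a b i ≤ b := by
  unfold rect
  split_ifs <;> omega

lemma sum_rect_comp_perm {m : ℕ} (hm : m ≤ n) (σ : Equiv.Perm (Fin n)) :
    ∑ i, rect m 1 (σ i) = m := by
  rw [Equiv.sum_comp σ (fun i : Fin n => rect m 1 i)]
  simp only [rect, sum_boole, Fin.card_filter_val_lt, Nat.cast_id]
  omega

lemma exists_perm_rect_le {a : Fin n → ℕ} {m : ℕ} (h : m ≤ countAbove a 0) :
    ∃ σ : Equiv.Perm (Fin n), ∀ i, rect m 1 (σ i) ≤ a i := by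
  obtain ⟨σ, hσ⟩ := exists_perm_mapsTo (s := {j : Fin n | (j : ℕ) < m}) (t := {j | 0 < a j})
    (by rw [Fin.card_filter_val_lt]; exact (min_le_right _ _).trans h)
  refine ⟨σ.symm, fun i => ?_⟩
  unfold rect
  split_ifs with hi
  · have := hσ (σ.symm i) (by simpa using hi)
    rw [mem_filter, Equiv.apply_symm_apply] at this
    exact this.2
  · exact Nat.zero_le _

lemma exists_perm_lt_of_countAbove_le {a : Fin n → ℕ} {m : ℕ} (hm : m ≤ n)
    (h : countAbove a 0 ≤ m) :
    ∃ τ : Equiv.Perm (Fin n), ∀ j, 0 < a j → (τ j : ℕ) < m := by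
  obtain ⟨τ, hτ⟩ := exists_perm_mapsTo (s := {j | 0 < a j}) (t := {j : Fin n | (j : ℕ) < m})
    (by rw [Fin.card_filter_val_lt, min_eq_right hm]; exact h)
  exact ⟨τ, fun j hj => by simpa using hτ j (by simpa using hj)⟩

theorem exists_mem_succSet_le_rect_add (hl : l < n) (hz : PartitionOn n z)
    (σ τ : Equiv.Perm (Fin n)) :
    ∃ x ∈ succSet n l z, ∃ π : Equiv.Perm (Fin n),
      ∀ i, x (π i) ≤ rect (l + 1) 1 (σ i) + z (τ i) := by
  set u : Fin n → ℕ := fun i => rect (l + 1) 1 (σ i) + z (τ i)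
  obtain ⟨π, hπ⟩ := exists_antitone_comp_perm u
  have hzn := hz.antitone
  have hlow : (fun i : Fin n => z i) ≤ u ∘ π := le_of_countAbove_le hzn hπ fun c => calc
    _ = countAbove ((fun i : Fin n => z i) ∘ τ) c := (countAbove_comp_perm _ τ c).symm
    _ ≤ countAbove u c := countAbove_mono (fun i => Nat.le_add_left _ _) c
    _ = countAbove (u ∘ π) c := (countAbove_comp_perm u π c).symm
  have hu : u ≤ ((fun i : Fin n => z i) + 1) ∘ τ := fun i => by
    have := rect_le (l + 1) 1 (σ i)
    simp only [u, Function.comp_apply, Pi.add_apply, Pi.one_apply]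
    omega
  have hup : u ∘ π ≤ (fun i : Fin n => z i) + 1 :=
    le_of_countAbove_le hπ (hzn.add_const 1) fun c => calc
      _ = countAbove u c := countAbove_comp_perm u π c
      _ ≤ countAbove (((fun i : Fin n => z i) + 1) ∘ τ) c := countAbove_mono hu c
      _ = _ := countAbove_comp_perm _ τ c
  have hsum : ∑ i : Fin n, z i + l < ∑ i, (u ∘ π) i := by
    rw [Function.comp_def, Equiv.sum_comp π u, sum_add_distrib, sum_rect_comp_perm hl σ,
      Equiv.sum_comp τ (fun i : Fin n => z i)]
    omega
  obtain ⟨i, hli, hi⟩ := exists_lt_of_sum_lt hup hsum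
  refine ⟨zeroExtend (u ∘ π), ⟨partitionOn_zeroExtend hπ, fun j => ?_, i, hli, by simpa⟩,
    π.symm, fun j => by simp [u]⟩
  by_cases hj : j < n
  · rw [zeroExtend, dif_pos hj]
    exact hlow ⟨j, hj⟩
  · rw [hz.2 j (not_lt.1 hj)]
    exact Nat.zero_le _

theorem not_forall_le_of_mem_succSet (hz : PartitionOn n z) (hzflat : ∀ i ≤ l, z i = z 0)
    {a : Fin n → ℕ} {τ : Equiv.Perm (Fin n)} (haτ : ∀ j, 0 < a j → (τ j : ℕ) < l + 1)
    (ha : countAbove a 0 ≤ l) {x : ℕ → ℕ} (hx : x ∈ succSet n l z)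
    (π : Equiv.Perm (Fin n)) :
    ¬ ∀ i, x (π i) ≤ a i + z (τ i) := by
  intro hle
  obtain ⟨hxp, -, i, hli, hi⟩ := hx
  have hin : i < n := by
    by_contra! h
    rw [hxp.2 i h] at hi
    exact Nat.not_lt_zero _ hi
  have hlt : i < countAbove (fun j : Fin n => x j) (z i) :=
    lt_countAbove hxp.antitone (m := ⟨i, hin⟩) hi
  have hcount : countAbove (fun j : Fin n => x j) (z i) ≤
      countAbove (a ∘ τ.symm + fun j : Fin n => z j) (z i) := calc
    _ = countAbove ((fun j : Fin n => x j) ∘ π) (z i) := (countAbove_comp_perm _ π _).symm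
    _ ≤ countAbove ((a ∘ τ.symm + fun j : Fin n => z j) ∘ τ) (z i) :=
      countAbove_mono (fun j => by simpa using hle j) _
    _ = _ := countAbove_comp_perm _ τ _
  have hbound : countAbove (a ∘ τ.symm + fun j : Fin n => z j) (z i) ≤ i :=
    countAbove_add_le (i := ⟨i, hin⟩) hz.antitone (t := z 0) (fun j => hz.1 0 j (Nat.zero_le _))
      (fun j hj => hzflat j (by simpa using haτ _ hj))
      (by rw [countAbove_comp_perm]; exact ha.trans hli)
  omega

end Partitions

section MonomialIdeals

variable {k : Type*} [Field k] {n : ℕ}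

noncomputable def permExp (x : ℕ → ℕ) (σ : Equiv.Perm (Fin n)) : Fin n →₀ ℕ :=
  Finsupp.equivFunOnFinite.symm fun i => x (σ i)

@[simp]
lemma permExp_apply (x : ℕ → ℕ) (σ : Equiv.Perm (Fin n)) (i : Fin n) :
    permExp x σ i = x (σ i) := rfl

lemma prod_X_pow_eq_monomial_permExp (x : ℕ → ℕ) (σ : Equiv.Perm (Fin n)) :
    ∏ i, (X i : MvPolynomial (Fin n) k) ^ x (σ i) = monomial (permExp x σ) 1 := by
  rw [monomial_eq, C_1, one_mul, Finsupp.prod_fintype _ _ fun _ => pow_zero _]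
  rfl

lemma Ipart_eq_span (x : ℕ → ℕ) :
    Ipart k n x = Ideal.span ((monomial · (1 : k)) '' Set.range (permExp x)) := by
  simp only [Ipart, prod_X_pow_eq_monomial_permExp]
  congr 1
  ext
  simp [eq_comm]

lemma IXset_eq_span (Xs : Set (ℕ → ℕ)) :
    IXset k n Xs = Ideal.span ((monomial · (1 : k)) ''
      {s | ∃ x ∈ Xs, ∃ σ : Equiv.Perm (Fin n), permExp x σ = s}) := by
  simp only [IXset, Ipart_eq_span, ← Ideal.span_iUnion]
  congr 1
  ext
  simp

lemma mem_IXset_iff {Xs : Set (ℕ → ℕ)} {f : MvPolynomial (Fin n) k} :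
    f ∈ IXset k n Xs ↔
      ∀ m ∈ f.support, ∃ x ∈ Xs, ∃ σ : Equiv.Perm (Fin n), ∀ i, x (σ i) ≤ m i := by
  rw [IXset_eq_span, mem_ideal_span_monomial_image]
  simp [Finsupp.le_def]

lemma mem_Ipart_iff {x : ℕ → ℕ} {f : MvPolynomial (Fin n) k} :
    f ∈ Ipart k n x ↔
      ∀ m ∈ f.support, ∃ σ : Equiv.Perm (Fin n), ∀ i, x (σ i) ≤ m i := by
  simpa [IXset] using mem_IXset_iff (Xs := {x}) (f := f)

lemma monomial_mem_IXset_iff {Xs : Set (ℕ → ℕ)} {s : Fin n →₀ ℕ} :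
    monomial s (1 : k) ∈ IXset k n Xs ↔
      ∃ x ∈ Xs, ∃ σ : Equiv.Perm (Fin n), ∀ i, x (σ i) ≤ s i := by
  simp [mem_IXset_iff]

lemma IXset_le_Ipart {Xs : Set (ℕ → ℕ)} {z : ℕ → ℕ}
    (h : ∀ x ∈ Xs, ∀ i, z i ≤ x i) :
    IXset k n Xs ≤ Ipart k n z := fun f hf =>
  mem_Ipart_iff.2 fun m hm => by
    obtain ⟨x, hx, σ, hσ⟩ := mem_IXset_iff.1 hf m hm
    exact ⟨σ, fun i => (h x hx _).trans (hσ i)⟩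

end MonomialIdeals

section Colon

variable {k : Type*} [Field k] {n l : ℕ} {z : ℕ → ℕ}

theorem Ipart_rect_mul_Ipart_le (hl : l < n) (hz : PartitionOn n z) :
    Ipart k n (rect (l + 1) 1) * Ipart k n z ≤ IXset k n (succSet n l z) := by
  rw [Ipart_eq_span, Ipart_eq_span, Ideal.span_mul_span', Ideal.span_le]
  rintro _ ⟨_, ⟨_, ⟨σ, rfl⟩, rfl⟩, _, ⟨_, ⟨τ, rfl⟩, rfl⟩, rfl⟩
  simp only [SetLike.mem_coe, monomial_mul, one_mul, monomial_mem_IXset_iff]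
  simpa using exists_mem_succSet_le_rect_add hl hz σ τ

theorem colon_le_Ipart_rect (hl : l < n) (hz : PartitionOn n z)
    (hzflat : ∀ i ≤ l, z i = z 0) :
    Submodule.colon (IXset k n (succSet n l z)) (Ipart k n z) ≤ Ipart k n (rect (l + 1) 1) := by
  intro r hr
  by_contra hr'
  obtain ⟨a, ha, hna⟩ : ∃ a ∈ r.support,
      ¬ ∃ σ : Equiv.Perm (Fin n), ∀ i, rect (l + 1) 1 (σ i) ≤ a i := by
    simpa [mem_Ipart_iff] using hr'
  have hsupp : countAbove a 0 ≤ l := by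
    by_contra! h
    exact hna (exists_perm_rect_le h)
  obtain ⟨τ, hτ⟩ := exists_perm_lt_of_countAbove_le hl (hsupp.trans l.le_succ)
  have hmem : r * monomial (permExp z τ) 1 ∈ IXset k n (succSet n l z) := by
    refine Submodule.mem_colon.1 hr _ ?_
    rw [Ipart_eq_span]
    exact Ideal.subset_span ⟨_, ⟨τ, rfl⟩, rfl⟩
  have hau : a + permExp z τ ∈ (r * monomial (permExp z τ) 1).support := by
    rwa [mem_support_iff, coeff_mul_monomial, mul_one, ← mem_support_iff]
  obtain ⟨x, hx, π, hπ⟩ := mem_IXset_iff.1 hmem _ hau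
  exact not_forall_le_of_mem_succSet hz hzflat hτ hsupp hx π (by simpa using hπ)

end Colon

theorem stmt_2 {k : Type*} [Field k] (n l : ℕ) (hl : l < n)
    (z : ℕ → ℕ) (hz : PartitionOn n z) (hzflat : ∀ i ≤ l, z i = z 0) :
    IXset k n (succSet n l z) ≤ Ipart k n z ∧
      Submodule.colon (IXset k n (succSet n l z)) (Ipart k n z) =
        Ipart k n (rect (l + 1) 1) := by
  refine ⟨IXset_le_Ipart fun x hx => hx.2.1, le_antisymm (colon_le_Ipart_rect hl hz hzflat) ?_⟩
  exact fun r hr => Submodule.mem_colon.2 fun p hp =>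
    Ipart_rect_mul_Ipart_le hl hz (Ideal.mul_mem_mul hr hp)
end

section
/- Let Y ⊆ P_n, 0 ≤ l < n, and z ∈ P_n with z_1 = ⋯ = z_{l+1}. Assume that I_{succ(z,l)} ⊆ I_Y ⊆ I_{Y_{z,l}} and that (z,l) ∈ Z(Y). Then Z(Y ∪ {z}) = Z(Y) \ {(z,l)}. -/
open MvPolynomial

/-!
The ideal hypotheses are only used through their combinatorial shadow: containment of
monomial ideals generated by `S_n`-orbits of partitions means that every partition of the
smaller family dominates, part by part, one of the larger family. Thus every
`x ∈ succ(z,l)` dominates some `y ∈ Y`, and every `y ∈ Y` exceeds `z` in some part of index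
`≥ l + 1`, because every element of `Y_{z,l}` does.

Both conditions defining `(w, m) ∈ Z(X)` only see the parts `min (x i) (w 0 + 1)`. If
`w 0 < z 0`, raising the first `l + 1` parts of `z` by one gives an element of `succ(z,l)`
with the same such parts, so some `y ∈ Y` does whatever `z` does and adding `z` changes
nothing. If `w 0 ≥ z 0` and `z ≤ w`, then `z` itself has `z'_{w 0 + 1} = 0`, which excludes
`(w, m)` from `Z(Y ∪ {z})`; on the other side, the only such pair in `Z(Y)` is `(z, l)`.
-/

lemma PartitionOn.antitone_s6 {n : ℕ} {x : ℕ → ℕ} (h : PartitionOn n x) : Antitone x :=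
  fun i j hij => h.1 i j hij

lemma trunc_eq_self {x : ℕ → ℕ} {c : ℕ} (h : ∀ i, x i ≤ c) : trunc x c = x :=
  funext fun i => min_eq_left (h i)

lemma trunc_mono {x y : ℕ → ℕ} (hyx : y ≤ x) (c : ℕ) : trunc y c ≤ trunc x c :=
  fun i => min_le_min_right c (hyx i)

lemma trunc_eq_of_min_eq {x z : ℕ → ℕ} {c : ℕ}
    (h : ∀ i, min (x i) (c + 1) = min (z i) (c + 1)) : trunc x c = trunc z c := by
  funext i
  have := h i
  simp only [trunc]
  omega

lemma conj_eq_of_min_eq {x z : ℕ → ℕ} {c : ℕ}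
    (h : ∀ i, min (x i) (c + 1) = min (z i) (c + 1)) : conj x (c + 1) = conj z (c + 1) := by
  unfold conj
  congr 1
  ext i
  have := h i
  simp only [Set.mem_ofPred_eq]
  omega

lemma conj_eq_zero_of_le {x : ℕ → ℕ} {c : ℕ} (h : ∀ i, x i ≤ c) : conj x (c + 1) = 0 := by
  have : {j | c + 1 ≤ x j} = ∅ := Set.eq_empty_of_forall_notMem fun j hj => by
    have := h j
    simp only [Set.mem_ofPred_eq] at hj
    omega
  rw [conj, this, Set.ncard_empty]

lemma conj_mono {n : ℕ} {x y : ℕ → ℕ} (hx : ∀ i, n ≤ i → x i = 0) (hyx : y ≤ x) (c : ℕ) :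
    conj y (c + 1) ≤ conj x (c + 1) := by
  have hfin : {j | c + 1 ≤ x j}.Finite := (Set.finite_Iio n).subset fun j hj => by
    by_contra hjn
    simp only [Set.mem_ofPred_eq, Set.mem_Iio, not_lt] at hj hjn
    rw [hx j hjn] at hj
    omega
  exact Set.ncard_le_ncard (fun j (hj : c + 1 ≤ y j) => hj.trans (hyx j)) hfin

section ZX

variable {n : ℕ} {X : Set (ℕ → ℕ)} {w : ℕ → ℕ} {m : ℕ}

lemma mem_ZX_mk : (w, m) ∈ ZX n X ↔ PartitionOn n w ∧
    (∃ x ∈ X, trunc x (w 0) ≤ w ∧ conj x (w 0 + 1) ≤ m + 1) ∧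
    ∀ x ∈ X, trunc x (w 0) ≤ w → conj x (w 0 + 1) ≤ m + 1 → conj x (w 0 + 1) = m + 1 :=
  Iff.rfl

lemma ZX_snd_unique {m' : ℕ} (h : (w, m) ∈ ZX n X) (h' : (w, m') ∈ ZX n X) : m = m' := by
  obtain ⟨-, ⟨x, hx, hxt, hxc⟩, hall⟩ := mem_ZX_mk.mp h
  obtain ⟨-, ⟨x', hx', hxt', hxc'⟩, hall'⟩ := mem_ZX_mk.mp h'
  have := hall x hx hxt hxc
  have := hall' x' hx' hxt' hxc'
  rcases le_total m m' with hle | hle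
  · have := hall' x hx hxt (by omega)
    omega
  · have := hall x' hx' hxt' (by omega)
    omega

lemma notMem_ZX_of_conj_eq_zero {x : ℕ → ℕ} (hx : x ∈ X) (hxt : trunc x (w 0) ≤ w)
    (hxc : conj x (w 0 + 1) = 0) : (w, m) ∉ ZX n X := fun h => by
  have := (mem_ZX_mk.mp h).2.2 x hx hxt (by omega)
  omega

lemma mem_ZX_union_singleton_iff {z : ℕ → ℕ}
    (hcov : trunc z (w 0) ≤ w →
      ∃ y ∈ X, trunc y (w 0) ≤ w ∧ conj y (w 0 + 1) ≤ conj z (w 0 + 1)) :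
    (w, m) ∈ ZX n (X ∪ {z}) ↔ (w, m) ∈ ZX n X := by
  rw [mem_ZX_mk, mem_ZX_mk]
  constructor
  · rintro ⟨hw, ⟨x, hx | rfl, hxt, hxc⟩, hall⟩
    · exact ⟨hw, ⟨x, hx, hxt, hxc⟩, fun x hx => hall x (Or.inl hx)⟩
    · obtain ⟨y, hy, hyt, hyc⟩ := hcov hxt
      exact ⟨hw, ⟨y, hy, hyt, hyc.trans hxc⟩, fun x hx => hall x (Or.inl hx)⟩
  · rintro ⟨hw, ⟨x, hx, hxt, hxc⟩, hall⟩
    refine ⟨hw, ⟨x, Or.inl hx, hxt, hxc⟩, ?_⟩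
    rintro x (hx | rfl) hxt hxc
    · exact hall x hx hxt hxc
    · obtain ⟨y, hy, hyt, hyc⟩ := hcov hxt
      have := hall y hy hyt (hyc.trans hxc)
      omega

end ZX

lemma prod_X_pow_eq_monomial_equivFunOnFinite (k : Type*) [Field k] (n : ℕ) (g : Fin n → ℕ) :
    ∏ i : Fin n, (X i : MvPolynomial (Fin n) k) ^ g i
      = monomial (Finsupp.equivFunOnFinite.symm g) (1 : k) := by
  rw [← prod_X_pow_eq_monomial]
  refine (Finset.prod_subset (Finset.subset_univ _) fun i _ hi => ?_).symm
  simp only [Finsupp.mem_support_iff, ne_eq, not_not, Finsupp.coe_equivFunOnFinite_symm] at hi ⊢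
  rw [hi, pow_zero]

lemma IXset_eq_span_monomial (k : Type*) [Field k] (n : ℕ) (Xs : Set (ℕ → ℕ)) :
    IXset k n Xs = Ideal.span ((fun d => monomial d (1 : k)) ''
      { d : Fin n →₀ ℕ | ∃ y ∈ Xs, ∃ σ : Equiv.Perm (Fin n),
          d = Finsupp.equivFunOnFinite.symm fun i : Fin n => y ((σ i : Fin n) : ℕ) }) := by
  have hIpart : ∀ x, Ipart k n x = Ideal.span ((fun d => monomial d (1 : k)) ''
      { d | ∃ σ : Equiv.Perm (Fin n),
          d = Finsupp.equivFunOnFinite.symm fun i : Fin n => x ((σ i : Fin n) : ℕ) }) := by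
    intro x
    rw [Ipart]
    congr 1
    ext f
    simp [prod_X_pow_eq_monomial_equivFunOnFinite, eq_comm]
  rw [IXset]
  simp_rw [hIpart]
  rw [iSup_subtype', ← Ideal.span_iUnion, ← Set.image_iUnion]
  congr 2
  ext d
  simp

lemma mon_mem_IXset_iff (k : Type*) [Field k] (n : ℕ) (Xs : Set (ℕ → ℕ)) (u : ℕ → ℕ) :
    mon k n u ∈ IXset k n Xs ↔
      ∃ y ∈ Xs, ∃ σ : Equiv.Perm (Fin n), ∀ i : Fin n, y ((σ i : Fin n) : ℕ) ≤ u (i : ℕ) := by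
  classical
  rw [IXset_eq_span_monomial, mon, prod_X_pow_eq_monomial_equivFunOnFinite,
    mem_ideal_span_monomial_image, support_monomial, if_neg one_ne_zero]
  simp only [Finset.mem_singleton, forall_eq, Set.mem_ofPred_eq]
  constructor
  · rintro ⟨_, ⟨y, hy, σ, rfl⟩, hle⟩
    exact ⟨y, hy, σ, fun i => by simpa using hle i⟩
  · rintro ⟨y, hy, σ, hle⟩
    exact ⟨_, ⟨y, hy, σ, rfl⟩, fun i => by simpa using hle i⟩

lemma exists_ge_apply_le {n : ℕ} (σ : Equiv.Perm (Fin n)) (i : Fin n) :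
    ∃ j, i ≤ j ∧ σ j ≤ i := by
  by_contra! h
  have hcard := Finset.card_le_card_of_injOn σ
    (fun j hj => Finset.mem_Ioi.mpr (h j (Finset.mem_Ici.mp hj))) σ.injective.injOn
  rw [Fin.card_Ici, Fin.card_Ioi] at hcard
  omega

lemma le_of_comp_perm_le {n : ℕ} {x y : ℕ → ℕ} (hx : Antitone x) (hy : Antitone y)
    (hy0 : ∀ i, n ≤ i → y i = 0) (σ : Equiv.Perm (Fin n))
    (h : ∀ i : Fin n, y ((σ i : Fin n) : ℕ) ≤ x i) : y ≤ x := by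
  intro i
  by_cases hi : n ≤ i
  · simp [hy0 i hi]
  obtain ⟨j, hij, hji⟩ := exists_ge_apply_le σ ⟨i, by omega⟩
  calc y i ≤ y (σ j) := hy (Fin.le_def.mp hji)
    _ ≤ x j := h j
    _ ≤ x i := hx (Fin.le_def.mp hij)

lemma exists_le_of_IXset_le {k : Type*} [Field k] {n : ℕ} {A B : Set (ℕ → ℕ)}
    (h : IXset k n A ≤ IXset k n B) (hB : ∀ y ∈ B, PartitionOn n y)
    {x : ℕ → ℕ} (hxA : x ∈ A) (hx : Antitone x) : ∃ y ∈ B, y ≤ x := by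
  obtain ⟨y, hyB, σ, hle⟩ :=
    (mon_mem_IXset_iff k n B x).mp (h ((mon_mem_IXset_iff k n A x).mpr ⟨x, hxA, 1, by simp⟩))
  exact ⟨y, hyB, le_of_comp_perm_le hx (hB y hyB).1 (hB y hyB).2 σ hle⟩

lemma rect_partitionOn {n a : ℕ} (b : ℕ) (h : a ≤ n) : PartitionOn n (rect a b) := by
  refine ⟨fun i j hij => ?_, fun i hi => if_neg (by omega)⟩
  simp only [rect]
  split_ifs <;> omega

lemma Yset_partitionOn {n l : ℕ} (hl : l < n) (z : ℕ → ℕ) :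
    ∀ u ∈ Yset n z l, PartitionOn n u := by
  rintro u (rfl | ⟨m, -, hm, -, rfl⟩)
  · exact rect_partitionOn _ hl
  · exact rect_partitionOn _ hm

lemma exists_lt_of_mem_Yset {n l : ℕ} {z : ℕ → ℕ} (hzflat : ∀ i ≤ l, z i = z 0) :
    ∀ u ∈ Yset n z l, ∃ i, l ≤ i ∧ z i < u i := by
  rintro u (rfl | ⟨m, hm, -, -, rfl⟩)
  · exact ⟨l, le_rfl, by simp [rect, hzflat l le_rfl]⟩
  · exact ⟨m + 1, by omega, by simp [rect]⟩

section Cover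

variable {n l : ℕ} {z : ℕ → ℕ} {Y : Set (ℕ → ℕ)}

lemma add_rect_mem_succSet (hl : l < n) (hz : PartitionOn n z) :
    z + rect (l + 1) 1 ∈ succSet n l z := by
  have hr := rect_partitionOn (n := n) 1 (Nat.succ_le_of_lt hl)
  refine ⟨⟨hz.antitone_s6.add hr.antitone_s6, fun i hi => ?_⟩, fun i => ?_, l, le_rfl, ?_⟩
  · simp [hz.2 i hi, hr.2 i hi]
  · simp
  · simp [rect]

lemma exists_trunc_le_conj_le_of_lt (hl : l < n) (hz : PartitionOn n z)
    (hzflat : ∀ i ≤ l, z i = z 0) (hsucc : ∀ x ∈ succSet n l z, ∃ y ∈ Y, y ≤ x)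
    {c : ℕ} (hc : c < z 0) :
    ∃ y ∈ Y, trunc y c ≤ trunc z c ∧ conj y (c + 1) ≤ conj z (c + 1) := by
  have hx := add_rect_mem_succSet hl hz
  have hmin : ∀ i, min ((z + rect (l + 1) 1) i) (c + 1) = min (z i) (c + 1) := by
    intro i
    simp only [Pi.add_apply, rect]
    split_ifs with hi
    · have := hzflat i (by omega)
      omega
    · rfl
  obtain ⟨y, hyY, hyx⟩ := hsucc _ hx
  refine ⟨y, hyY, ?_, ?_⟩
  · exact (trunc_mono hyx c).trans (trunc_eq_of_min_eq hmin).le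
  · exact (conj_mono hx.1.2 hyx c).trans (conj_eq_of_min_eq hmin).le

lemma eq_of_mem_ZX_of_le (hzflat : ∀ i ≤ l, z i = z 0)
    (hsucc : ∀ x ∈ succSet n l z, ∃ y ∈ Y, y ≤ x)
    (hexceeds : ∀ y ∈ Y, ∃ i, l ≤ i ∧ z i < y i) (hzl : (z, l) ∈ ZX n Y)
    {w : ℕ → ℕ} {m : ℕ} (hw : (w, m) ∈ ZX n Y) (hzw : z ≤ w) : (w, m) = (z, l) := by
  obtain ⟨hwp, ⟨x, hxY, hxt, -⟩, -⟩ := mem_ZX_mk.mp hw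
  by_cases hws : ∃ i, l ≤ i ∧ z i < w i
  · obtain ⟨y, hyY, hyw⟩ := hsucc w ⟨hwp, hzw, hws⟩
    have hyw0 : ∀ i, y i ≤ w 0 := fun i => (hyw i).trans (hwp.antitone_s6 (Nat.zero_le i))
    exact absurd hw (notMem_ZX_of_conj_eq_zero hyY
      ((trunc_eq_self hyw0).le.trans hyw) (conj_eq_zero_of_le hyw0))
  push Not at hws
  have htail : ∀ i, l ≤ i → w i = z i := fun i hi => le_antisymm (hws i hi) (hzw i)
  rcases (show z 0 ≤ w 0 from hzw 0).eq_or_lt with h0 | h0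
  · have hwz : w = z := funext fun i => by
      rcases le_total l i with hi | hi
      · exact htail i hi
      · have hzi : z i ≤ w i := hzw i
        have hwi : w i ≤ w 0 := hwp.antitone_s6 (Nat.zero_le i)
        have := hzflat i hi
        omega
    subst hwz
    rw [ZX_snd_unique hw hzl]
  · obtain ⟨i, hi, hzx⟩ := hexceeds x hxY
    have hxi : min (x i) (w 0) ≤ w i := hxt i
    have := htail i hi
    have := htail l le_rfl
    have := hzflat l le_rfl
    have hwi : w i ≤ w l := hwp.antitone_s6 hi
    omega

end Cover

theorem stmt_6 {k : Type*} [Field k] (n l : ℕ) (hl : l < n)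
    (z : ℕ → ℕ) (hz : PartitionOn n z) (hzflat : ∀ i ≤ l, z i = z 0)
    (Y : Set (ℕ → ℕ)) (hY : ∀ y ∈ Y, PartitionOn n y)
    (h1 : IXset k n (succSet n l z) ≤ IXset k n Y)
    (h2 : IXset k n Y ≤ IXset k n (Yset n z l))
    (hzl : (z, l) ∈ ZX n Y) :
    ZX n (Y ∪ {z}) = ZX n Y \ {(z, l)} := by
  have hsucc : ∀ x ∈ succSet n l z, ∃ y ∈ Y, y ≤ x :=
    fun x hx => exists_le_of_IXset_le h1 hY hx hx.1.antitone_s6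
  have hexceeds : ∀ y ∈ Y, ∃ i, l ≤ i ∧ z i < y i := fun y hy => by
    obtain ⟨u, hu, huy⟩ := exists_le_of_IXset_le h2 (Yset_partitionOn hl z) hy (hY y hy).antitone_s6
    obtain ⟨i, hi, hzu⟩ := exists_lt_of_mem_Yset hzflat u hu
    exact ⟨i, hi, hzu.trans_le (huy i)⟩
  ext ⟨w, m⟩
  rw [Set.mem_sdiff, Set.mem_singleton_iff]
  rcases lt_or_ge (w 0) (z 0) with hw | hw
  · have hne : (w, m) ≠ (z, l) := fun h => by cases h; exact lt_irrefl _ hw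
    rw [mem_ZX_union_singleton_iff fun hzt => ?_, and_iff_left hne]
    obtain ⟨y, hy, hyt, hyc⟩ := exists_trunc_le_conj_le_of_lt hl hz hzflat hsucc hw
    exact ⟨y, hy, hyt.trans hzt, hyc⟩
  have hzw0 : ∀ i, z i ≤ w 0 := fun i => (hz.antitone_s6 (Nat.zero_le i)).trans hw
  by_cases hzw : z ≤ w
  · refine iff_of_false ?_ fun ⟨hwY, hne⟩ =>
      hne (eq_of_mem_ZX_of_le hzflat hsucc hexceeds hzl hwY hzw)
    exact notMem_ZX_of_conj_eq_zero (Or.inr rfl) ((trunc_eq_self hzw0).le.trans hzw)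
      (conj_eq_zero_of_le hzw0)
  · have hne : (w, m) ≠ (z, l) := fun h => by cases h; exact hzw le_rfl
    rw [mem_ZX_union_singleton_iff fun hzt => absurd ((trunc_eq_self hzw0).ge.trans hzt) hzw,
      and_iff_left hne]
end
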